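/- There exist r > 0 and a holomorphic function G on the open ball B(√8, r) ⊆ ℂ with G(√8) = −3·2^{7/4} such that for every z ∈ B(√8, r) with z ∉ (−∞, √8], one has (1/2)·∫_{[√8, z]} (8 + 4s² − s⁴)·(s − √8)^{−1/2}·(s + √8)^{−1/2} ds = (z − √8)^{1/2}·G(z), where the integral is taken along the straight segment from √8 to z (the integrand has an integrable singularity at s = √8). Equivalently, φ°(z) = −3·2^{7/4}·(z − √8)^{1/2}·(1 + h°(z)) with h° holomorphic near √8 and h°(√8) = 0. -/

import Mathlib

/-!
Along the segment `s = √8 + u (z - √8)`, `0 ≤ u ≤ 1`, the singular factor splits as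
`(s - √8)^{-1/2} = u^{-1/2} (z - √8)^{-1/2}` because `u` is a nonnegative real. Hence the
integral is `(z - √8)^{1/2}` times `∫₀¹ u^{-1/2} Q(√8 + u (z - √8)) du`, where
`Q(s) = (8 + 4s² - s⁴)(s + √8)^{-1/2}` (`phiRegular`) is holomorphic on `B(√8, √8)`.
Differentiating under the integral sign against the integrable weight `u^{-1/2}` shows that this
integral is holomorphic in `z`, and at `z = √8` it equals
`Q(√8) ∫₀¹ u^{-1/2} du = 2 Q(√8) = -6 · 2^{7/4}`.
-/

open MeasureTheory

/-- The point `√8 = 2√2` as a complex number. -/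
noncomputable def c8 : ℂ := (Real.sqrt 8 : ℝ)

/-- Integral of `g` along the straight segment from `c8` to `z`. -/
noncomputable def segIntegral (g : ℂ → ℂ) (z : ℂ) : ℂ :=
  (z - c8) * ∫ u in (0 : ℝ)..1, g (c8 + (u : ℂ) * (z - c8))

theorem Complex.ofReal_mul_cpow_of_nonneg {u : ℝ} (hu : 0 ≤ u) (x c : ℂ) :
    ((u : ℂ) * x) ^ c = (u : ℂ) ^ c * x ^ c := by
  rcases hu.eq_or_lt with rfl | hu
  · rcases eq_or_ne c 0 with rfl | hc <;> simp [*, Complex.zero_cpow]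
  rcases eq_or_ne x 0 with rfl | hx
  · rcases eq_or_ne c 0 with rfl | hc <;> simp [*, Complex.zero_cpow]
  have hu0 : (u : ℂ) ≠ 0 := by exact_mod_cast hu.ne'
  rw [cpow_def_of_ne_zero (mul_ne_zero hu0 hx), cpow_def_of_ne_zero hu0, cpow_def_of_ne_zero hx,
    log_ofReal_mul hu hx, ← ofReal_log hu.le, add_mul, exp_add]

section SegmentIntegral

variable {Q : ℂ → ℂ} {a z : ℂ} {ρ : ℝ}

lemma add_ofReal_mul_sub_mem_ball (hz : z ∈ Metric.ball a ρ) {u : ℝ}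
    (hu : u ∈ Set.Icc (0 : ℝ) 1) :
    a + u * (z - a) ∈ Metric.ball a ρ := by
  simpa [Complex.real_smul] using
    (convex_ball a ρ).add_smul_sub_mem (Metric.mem_ball_self (Metric.pos_of_mem_ball hz)) hz hu

lemma ContinuousOn.comp_segment (hQ : ContinuousOn Q (Metric.ball a ρ))
    (hz : z ∈ Metric.ball a ρ) :
    ContinuousOn (fun u : ℝ => Q (a + u * (z - a))) (Set.uIcc 0 1) :=
  hQ.comp (by fun_prop) fun _ hu ↦
    add_ofReal_mul_sub_mem_ball hz (Set.uIcc_of_le (zero_le_one (α := ℝ)) ▸ hu)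

theorem differentiableOn_intervalIntegral_mul_comp_segment {w : ℝ → ℂ} {R : ℝ}
    (hQ : DifferentiableOn ℂ Q (Metric.ball a R)) (hw : IntervalIntegrable w volume 0 1) :
    DifferentiableOn ℂ (fun z ↦ ∫ u in (0 : ℝ)..1, w u * Q (a + u * (z - a)))
      (Metric.ball a R) := by
  intro z₀ hz₀
  obtain ⟨ρ, hz₀ρ, hρR⟩ : ∃ ρ, z₀ ∈ Metric.ball a ρ ∧ ρ < R := exists_between hz₀
  replace hρR : Metric.closedBall a ρ ⊆ Metric.ball a R := Metric.closedBall_subset_ball hρR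
  have hQR : Metric.ball a ρ ⊆ Metric.ball a R := Metric.ball_subset_closedBall.trans hρR
  have hQ' : ContinuousOn (deriv Q) (Metric.ball a R) :=
    (hQ.analyticOnNhd Metric.isOpen_ball).deriv.continuousOn
  obtain ⟨C, hC⟩ := (isCompact_closedBall a ρ).exists_bound_of_continuousOn (hQ'.mono hρR)
  have hF_int : ∀ x ∈ Metric.ball a ρ,
      IntervalIntegrable (fun u : ℝ ↦ w u * Q (a + u * (x - a))) volume 0 1 := fun x hx ↦
    hw.mul_continuousOn ((hQ.continuousOn.mono hQR).comp_segment hx)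
  have key := intervalIntegral.hasDerivAt_integral_of_dominated_loc_of_deriv_le
    (F' := fun x u ↦ w u * (deriv Q (a + u * (x - a)) * u)) (bound := fun u ↦ ‖w u‖ * C)
    (Metric.isOpen_ball.mem_nhds hz₀ρ)
    (Filter.eventually_of_mem (Metric.isOpen_ball.mem_nhds hz₀ρ)
      fun x hx ↦ (hF_int x hx).def'.aestronglyMeasurable)
    (hF_int z₀ hz₀ρ)
    (hw.mul_continuousOn (((hQ'.mono hQR).comp_segment hz₀ρ).mul
      Complex.continuous_ofReal.continuousOn)).def'.aestronglyMeasurable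
    ?_ (hw.norm.mul_const C) ?_
  · exact key.2.differentiableAt.differentiableWithinAt
  · refine Filter.Eventually.of_forall fun u hu x hx ↦ ?_
    rw [Set.uIoc_of_le (zero_le_one (α := ℝ))] at hu
    have hs := add_ofReal_mul_sub_mem_ball hx (Set.Ioc_subset_Icc_self hu)
    rw [norm_mul, norm_mul, Complex.norm_real, Real.norm_of_nonneg hu.1.le]
    exact mul_le_mul_of_nonneg_left
      (mul_le_of_le_one_right (norm_nonneg _) hu.2 |>.trans
        (hC _ (Metric.ball_subset_closedBall hs))) (norm_nonneg _)
  · refine Filter.Eventually.of_forall fun u hu x hx ↦ ?_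
    rw [Set.uIoc_of_le (zero_le_one (α := ℝ))] at hu
    have hs := hQR (add_ofReal_mul_sub_mem_ball hx (Set.Ioc_subset_Icc_self hu))
    have hinner : HasDerivAt (fun x : ℂ ↦ a + u * (x - a)) u x := by
      simpa using (((hasDerivAt_id x).sub_const a).const_mul (u : ℂ)).const_add a
    exact ((hQ.differentiableAt (Metric.isOpen_ball.mem_nhds hs)).hasDerivAt.comp x
      hinner).const_mul (w u)

end SegmentIntegral

lemma sqrt_eight_eq_rpow : Real.sqrt 8 = (2 : ℝ) ^ ((3 : ℝ) / 2) := by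
  rw [Real.sqrt_eq_rpow, show (8 : ℝ) = 2 ^ (3 : ℝ) by norm_num, ← Real.rpow_mul (by norm_num)]
  norm_num

lemma c8_sq : c8 ^ 2 = 8 := by
  rw [c8, ← Complex.ofReal_pow, Real.sq_sqrt (by norm_num)]; norm_num

lemma c8_add_self : c8 + c8 = ((2 : ℝ) ^ ((5 : ℝ) / 2) : ℝ) := by
  rw [c8, ← Complex.ofReal_add, sqrt_eight_eq_rpow, ← two_mul]
  congr 1
  rw [show (5 : ℝ) / 2 = 1 + 3 / 2 by norm_num, Real.rpow_add (by norm_num), Real.rpow_one]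

noncomputable def phiRegular (s : ℂ) : ℂ := (8 + 4 * s ^ 2 - s ^ 4) * (s + c8) ^ (-(1 : ℂ) / 2)

lemma differentiableOn_phiRegular :
    DifferentiableOn ℂ phiRegular (Metric.ball c8 (Real.sqrt 8)) := by
  intro s hs
  have hre : 0 < (s + c8).re := by
    have := (abs_le.mp ((Complex.abs_re_le_norm (s - c8)).trans (mem_ball_iff_norm.mp hs).le)).1
    simp only [Complex.sub_re, Complex.add_re, c8, Complex.ofReal_re] at this ⊢
    linarith [Real.sqrt_pos.mpr (by norm_num : (0 : ℝ) < 8)]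
  unfold phiRegular
  exact (by fun_prop : DifferentiableAt ℂ (fun s : ℂ ↦ 8 + 4 * s ^ 2 - s ^ 4) s).mul
    ((differentiableAt_id.add_const c8).cpow (differentiableAt_const _) (Or.inl hre))
    |>.differentiableWithinAt

lemma phiRegular_c8 : phiRegular c8 = ((-3 * (2 : ℝ) ^ ((7 : ℝ) / 4) : ℝ) : ℂ) := by
  have h4 : c8 ^ 4 = 64 := by rw [show 4 = 2 * 2 from rfl, pow_mul, c8_sq]; norm_num
  have hpow : (2 : ℝ) ^ ((7 : ℝ) / 4) = 8 * ((2 : ℝ) ^ ((5 : ℝ) / 2)) ^ (-(1 : ℝ) / 2) := by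
    rw [← Real.rpow_mul (by norm_num), show (8 : ℝ) = 2 ^ (3 : ℝ) by norm_num,
      ← Real.rpow_add (by norm_num)]
    norm_num
  have hcpow : (((2 : ℝ) ^ ((5 : ℝ) / 2) : ℝ) : ℂ) ^ (-(1 : ℂ) / 2)
      = (((2 : ℝ) ^ ((5 : ℝ) / 2)) ^ (-(1 : ℝ) / 2) : ℝ) := by
    rw [Complex.ofReal_cpow (x := 2 ^ ((5 : ℝ) / 2)) (by positivity)]
    push_cast
    ring_nf
  rw [phiRegular, c8_sq, h4, c8_add_self, hcpow, hpow]
  push_cast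
  ring

noncomputable def phiFactor (z : ℂ) : ℂ :=
  (1 / 2) * ∫ u in (0 : ℝ)..1, (u : ℂ) ^ (-(1 : ℂ) / 2) * phiRegular (c8 + u * (z - c8))

lemma differentiableOn_phiFactor :
    DifferentiableOn ℂ phiFactor (Metric.ball c8 (Real.sqrt 8)) :=
  (differentiableOn_intervalIntegral_mul_comp_segment differentiableOn_phiRegular
    (intervalIntegral.intervalIntegrable_cpow' (by norm_num))).const_mul _

lemma intervalIntegral_cpow_neg_half : ∫ u in (0 : ℝ)..1, (u : ℂ) ^ (-(1 : ℂ) / 2) = 2 := by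
  rw [integral_cpow (Or.inl (by norm_num))]
  norm_num

lemma phiFactor_c8 : phiFactor c8 = ((-3 * (2 : ℝ) ^ ((7 : ℝ) / 4) : ℝ) : ℂ) := by
  simp only [phiFactor, sub_self, mul_zero, add_zero, intervalIntegral.integral_mul_const,
    intervalIntegral_cpow_neg_half, phiRegular_c8]
  ring

lemma segIntegral_eq_cpow_mul {z : ℂ} (hz : z ≠ c8) :
    segIntegral (fun s => (8 + 4 * s ^ 2 - s ^ 4) *
        (s - c8) ^ (-(1 : ℂ) / 2) * (s + c8) ^ (-(1 : ℂ) / 2)) z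
      = (z - c8) ^ ((1 : ℂ) / 2) * (2 * phiFactor z) := by
  have hz' : z - c8 ≠ 0 := sub_ne_zero.mpr hz
  have hintegrand : Set.EqOn
      (fun u : ℝ ↦ (8 + 4 * (c8 + u * (z - c8)) ^ 2 - (c8 + u * (z - c8)) ^ 4) *
        (c8 + u * (z - c8) - c8) ^ (-(1 : ℂ) / 2) * (c8 + u * (z - c8) + c8) ^ (-(1 : ℂ) / 2))
      (fun u : ℝ ↦ (z - c8) ^ (-(1 : ℂ) / 2) *
        ((u : ℂ) ^ (-(1 : ℂ) / 2) * phiRegular (c8 + u * (z - c8)))) (Set.uIcc 0 1) := by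
    intro u hu
    rw [Set.uIcc_of_le (zero_le_one (α := ℝ))] at hu
    simp only [add_sub_cancel_left, Complex.ofReal_mul_cpow_of_nonneg hu.1, phiRegular]
    ring
  have hhalf : (z - c8) ^ ((1 : ℂ) / 2) = (z - c8) * (z - c8) ^ (-(1 : ℂ) / 2) := by
    rw [show (1 : ℂ) / 2 = 1 + -(1 : ℂ) / 2 by norm_num, Complex.cpow_add _ _ hz', Complex.cpow_one]
  rw [segIntegral, intervalIntegral.integral_congr hintegrand, intervalIntegral.integral_const_mul,
    hhalf, phiFactor]
  ring

/-- Near `√8` the correction phase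
`φ°(z) = (1/2)∫_{√8}^{z}(8 + 4s² − s⁴)(s − √8)^{−1/2}(s + √8)^{−1/2} ds` factors as
`(z − √8)^{1/2} G(z)` with `G` holomorphic and `G(√8) = −3·2^{7/4}`. -/
theorem stmt13 :
    ∃ r > (0 : ℝ), ∃ G : ℂ → ℂ,
      DifferentiableOn ℂ G (Metric.ball c8 r) ∧
      G c8 = ((-3 * (2 : ℝ) ^ ((7 : ℝ) / 4) : ℝ) : ℂ) ∧
      ∀ z ∈ Metric.ball c8 r, ¬(z.im = 0 ∧ z.re ≤ Real.sqrt 8) →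
        (1 / 2 : ℂ) * segIntegral
            (fun s => (8 + 4 * s ^ 2 - s ^ 4) *
              (s - c8) ^ (-(1 : ℂ) / 2) * (s + c8) ^ (-(1 : ℂ) / 2)) z
          = (z - c8) ^ ((1 : ℂ) / 2) * G z := by
  refine ⟨Real.sqrt 8, Real.sqrt_pos.mpr (by norm_num), phiFactor,
    differentiableOn_phiFactor, phiFactor_c8, fun z _ hcut ↦ ?_⟩
  have hz : z ≠ c8 := by
    rintro rfl
    exact hcut ⟨rfl, le_rfl⟩
  rw [segIntegral_eq_cpow_mul hz]
  ring
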